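/- Taking the mirror image of a virtual knot transforms the odd writhe polynomial by f_{\bar{K}}(t) = −t² · f_K(t⁻¹). -/

import Mathlib

open Finset LaurentPolynomial

/-- A signed, oriented chord diagram (combinatorial Gauss diagram) with `n` chords:
the `2*n` chord endpoints on the circle are the elements of `Fin (2*n)` in (positive)
cyclic order; chord `i` has over endpoint `c⁺ = ep (i, true)`, under endpoint
`c⁻ = ep (i, false)` and a sign (writhe) `sign i ∈ {1, -1}`. -/
structure ChordDiagram (n : ℕ) where
  ep : Fin n × Bool ≃ Fin (2 * n)
  sign : Fin n → ℤ
  sign_unit : ∀ i, sign i = 1 ∨ sign i = -1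

namespace ChordDiagram

variable {n : ℕ}

/-- the over endpoint `c⁺` of a chord -/
def _root_.ChordDiagram.over (D : ChordDiagram n) (i : Fin n) : Fin (2 * n) := D.ep (i, true)

/-- the under endpoint `c⁻` of a chord -/
def under (D : ChordDiagram n) (i : Fin n) : Fin (2 * n) := D.ep (i, false)

/-- the number of steps from `b` to `x`, travelling in the positive direction
around the circle -/
def relpos (b x : Fin (2 * n)) : ℕ := (x.val + 2 * n - b.val) % (2 * n)

/-- `x` lies strictly between the endpoints of chord `i`, on the side swept out
going from `c⁺` to `c⁻` in the positive direction -/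
def StrictlyBetween (D : ChordDiagram n) (i : Fin n) (x : Fin (2 * n)) : Prop :=
  0 < relpos (D.over i) x ∧ relpos (D.over i) x < relpos (D.over i) (D.under i)

instance (D : ChordDiagram n) (i : Fin n) (x : Fin (2 * n)) :
    Decidable (D.StrictlyBetween i x) := inferInstanceAs (Decidable (_ ∧ _))

/-- two distinct chords interlink if their endpoints alternate around the circle,
i.e. exactly one endpoint of `j` lies strictly between the endpoints of `i` -/
def Interlinks (D : ChordDiagram n) (i j : Fin n) : Prop :=
  i ≠ j ∧ Xor' (D.StrictlyBetween i (D.over j)) (D.StrictlyBetween i (D.under j))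

instance (D : ChordDiagram n) (i j : Fin n) : Decidable (D.Interlinks i j) :=
  inferInstanceAs (Decidable (_ ∧ Xor _ _))

/-- the number of chords interlinking chord `i` -/
def interlinkCount (D : ChordDiagram n) (i : Fin n) : ℕ :=
  (univ.filter fun j => D.Interlinks i j).card

/-- the number of chord endpoints lying (strictly) on one side of chord `i` -/
def sideCount (D : ChordDiagram n) (i : Fin n) : ℕ :=
  (univ.filter fun x => D.StrictlyBetween i x).card

/-- a chord is odd if it interlinks an odd number of other chords -/
def OddChord (D : ChordDiagram n) (i : Fin n) : Prop := Odd (D.interlinkCount i)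

instance (D : ChordDiagram n) (i : Fin n) : Decidable (D.OddChord i) :=
  inferInstanceAs (Decidable (Odd _))

/-- The label `N(a)` of the arc whose terminal point is `a`: the sum of the signs of
all chords whose over endpoint is met strictly before their under endpoint when
traversing the circle once in the positive direction starting inside this arc. -/
def arcLabel (D : ChordDiagram n) (a : Fin (2 * n)) : ℤ :=
  ∑ i ∈ univ.filter fun i => relpos a (D.over i) < relpos a (D.under i), D.sign i

/-- The value `N(c)` of a chord: for a positive chord, the difference `x - y` of the
arc labels just before `c⁺` and just before `c⁻`; for a negative chord, the difference
`z - w` of the arc labels just after `c⁺` and just after `c⁻` (the label just after an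
over endpoint is the label just before it minus the sign, and the label just after an
under endpoint is the label just before it plus the sign). -/
def chordVal (D : ChordDiagram n) (i : Fin n) : ℤ :=
  if D.sign i = 1 then D.arcLabel (D.over i) - D.arcLabel (D.under i)
  else (D.arcLabel (D.over i) - D.sign i) - (D.arcLabel (D.under i) + D.sign i)

/-- the odd writhe `J(K) = Σ_{c odd} w(c)` -/
def oddWrithe (D : ChordDiagram n) : ℤ :=
  ∑ i ∈ univ.filter fun i => D.OddChord i, D.sign i

/-- the odd writhe polynomial `f_K(t) = Σ_{c odd} w(c) · t^{N(c)} ∈ ℤ[t,t⁻¹]` -/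
noncomputable def owp (D : ChordDiagram n) : LaurentPolynomial ℤ :=
  ∑ i ∈ univ.filter fun i => D.OddChord i, C (D.sign i) * T (D.chordVal i)

/-- evaluation of the odd writhe polynomial at a rational number `x`:
`Σ_{c odd} w(c) · x^{N(c)}` -/
def owpEval (D : ChordDiagram n) (x : ℚ) : ℚ :=
  ∑ i ∈ univ.filter fun i => D.OddChord i, (D.sign i : ℚ) * x ^ D.chordVal i

/-- the coefficient of `t^k` in a Laurent polynomial -/
def coeffOf (f : LaurentPolynomial ℤ) (k : ℤ) : ℤ := f.coeff k

/-- the degree `Deg f = max { |i| : coefficient of tⁱ in f is nonzero }` -/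
def owpDeg (f : LaurentPolynomial ℤ) : ℕ := f.coeff.support.sup fun k => k.natAbs

/-- reversing the orientation of the knot: the cyclic order of the endpoints is
reversed, while signs and over/under data of the crossings are preserved -/
def reverse (D : ChordDiagram n) : ChordDiagram n where
  ep := D.ep.trans Fin.revPerm
  sign := D.sign
  sign_unit := D.sign_unit

/-- the mirror image: every crossing is switched, so every chord's over and under
endpoints are exchanged and its sign is negated -/
def mirror (D : ChordDiagram n) : ChordDiagram n where
  ep := (Equiv.prodCongr (Equiv.refl (Fin n))
      ⟨fun b => !b, fun b => !b, Bool.not_not, Bool.not_not⟩).trans D.ep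
  sign := fun i => -D.sign i
  sign_unit := fun i => (D.sign_unit i).elim
    (fun h => Or.inr (show -D.sign i = -1 by rw [h]))
    (fun h => Or.inl (show -D.sign i = 1 by rw [h]; ring))

/-! ### Planarity via the Euler characteristic of the carrier surface

The diagram determines a 4-valent graph (vertices = chords, edges = the `2*n` arcs of
the circle) together with a rotation system at each vertex, coming from the structure
of a transversal crossing: for a positive crossing the counterclockwise order of the
four ends is (over-out, under-out, over-in, under-in), for a negative crossing it is
(over-out, under-in, over-in, under-out).  The diagram is realizable by a classical
(planar) knot diagram iff the resulting closed oriented carrier surface is a sphere,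
i.e. iff `V - E + F = n - 2n + F = 2`.

Darts are encoded as pairs `(p, io) : Fin (2*n) × Bool`, meaning the end of an arc
at the vertex through the circle point `p`, with `io = true` for the outgoing arc
(from `p` to `p+1`) and `io = false` for the incoming arc (from `p-1` to `p`). -/

/-- the other endpoint of the chord through a given endpoint -/
def otherEnd (D : ChordDiagram n) (p : Fin (2 * n)) : Fin (2 * n) :=
  D.ep ((D.ep.symm p).1, !(D.ep.symm p).2)

lemma otherEnd_otherEnd (D : ChordDiagram n) (p : Fin (2 * n)) :
    D.otherEnd (D.otherEnd p) = p := by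
  simp [otherEnd]

/-- whether the rotation at the vertex toggles the in/out marker when passing from
the end at `p` to the end at the other endpoint of its chord -/
def tog (D : ChordDiagram n) (p : Fin (2 * n)) : Bool :=
  if D.sign (D.ep.symm p).1 = 1 then !(D.ep.symm p).2 else (D.ep.symm p).2

/-- the vertex rotation permutation on darts -/
def vertexPerm (D : ChordDiagram n) : Equiv.Perm (Fin (2 * n) × Bool) :=
  Equiv.trans
    ⟨fun x => (x.1, xor x.2 (D.tog x.1)), fun x => (x.1, xor x.2 (D.tog x.1)),
      fun x => by simp [Bool.xor_assoc], fun x => by simp [Bool.xor_assoc]⟩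
    ⟨fun x => (D.otherEnd x.1, x.2), fun x => (D.otherEnd x.1, x.2),
      fun x => by simp [otherEnd_otherEnd], fun x => by simp [otherEnd_otherEnd]⟩

/-- the edge involution on darts, matching the two ends of each arc -/
def arcPerm (D : ChordDiagram n) : Equiv.Perm (Fin (2 * n) × Bool) :=
  ⟨fun x => if x.2 then (finRotate (2 * n) x.1, false) else ((finRotate (2 * n)).symm x.1, true),
   fun x => if x.2 then (finRotate (2 * n) x.1, false) else ((finRotate (2 * n)).symm x.1, true),
   fun x => by rcases x with ⟨p, _ | _⟩ <;> simp only [Bool.false_eq_true, if_false, if_true, Equiv.apply_symm_apply, Equiv.symm_apply_apply],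
   fun x => by rcases x with ⟨p, _ | _⟩ <;> simp only [Bool.false_eq_true, if_false, if_true, Equiv.apply_symm_apply, Equiv.symm_apply_apply]⟩

/-- the face permutation on darts -/
def facePerm (D : ChordDiagram n) : Equiv.Perm (Fin (2 * n) × Bool) :=
  (D.arcPerm).trans D.vertexPerm

/-- the number of faces: the number of orbits of the face permutation -/
noncomputable def faceCount (D : ChordDiagram n) : ℕ :=
  Nat.card (MulAction.orbitRel.Quotient (Subgroup.zpowers D.facePerm) (Fin (2 * n) × Bool))

/-- the chord diagram arises from a classical (planar) knot diagram: the carrier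
surface has Euler characteristic `V - E + F = n - 2n + faceCount = 2` -/
def PlanarRealizable (D : ChordDiagram n) : Prop := D.faceCount = n + 2

end ChordDiagram

namespace ChordDiagram

variable {n : ℕ}

lemma relpos_eq_ite (b x : Fin (2 * n)) :
    relpos b x = if b.val ≤ x.val then x.val - b.val else x.val + 2 * n - b.val := by
  have hb := b.isLt
  have hx := x.isLt
  unfold relpos
  split
  · rw [show x.val + 2 * n - b.val = (x.val - b.val) + 2 * n by omega, Nat.add_mod_right,
      Nat.mod_eq_of_lt (by omega)]
  · rw [Nat.mod_eq_of_lt (by omega)]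

lemma relpos_injective (a : Fin (2 * n)) : Function.Injective (relpos a) := by
  intro x y h
  have := x.isLt
  have := y.isLt
  rw [relpos_eq_ite, relpos_eq_ite] at h
  ext
  split at h <;> split at h <;> omega

@[simp] lemma mirror_over (D : ChordDiagram n) (i : Fin n) : D.mirror.over i = D.under i := rfl

@[simp] lemma mirror_under (D : ChordDiagram n) (i : Fin n) : D.mirror.under i = D.over i := rfl

@[simp] lemma mirror_sign (D : ChordDiagram n) (i : Fin n) : D.mirror.sign i = -D.sign i := rfl

lemma over_ne_under (D : ChordDiagram n) (i j : Fin n) : D.over i ≠ D.under j := by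
  simp [ChordDiagram.over, under]

lemma over_injective (D : ChordDiagram n) : Function.Injective D.over := by
  intro i j h
  simpa using D.ep.injective h

lemma under_injective (D : ChordDiagram n) : Function.Injective D.under := by
  intro i j h
  simpa using D.ep.injective h

lemma mirror_strictlyBetween_iff (D : ChordDiagram n) {i : Fin n} {x : Fin (2 * n)}
    (hover : x ≠ D.over i) (hunder : x ≠ D.under i) :
    D.mirror.StrictlyBetween i x ↔ ¬ D.StrictlyBetween i x := by
  have := (D.over i).isLt
  have := (D.under i).isLt
  have := x.isLt
  have := Fin.val_ne_of_ne hover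
  have := Fin.val_ne_of_ne hunder
  have := Fin.val_ne_of_ne (D.over_ne_under i i)
  simp only [StrictlyBetween, mirror_over, mirror_under, relpos_eq_ite]
  split <;> split <;> split <;> split <;> omega

lemma mirror_interlinks_iff (D : ChordDiagram n) (i j : Fin n) :
    D.mirror.Interlinks i j ↔ D.Interlinks i j := by
  rcases eq_or_ne i j with rfl | hij
  · simp [Interlinks]
  have hoo : D.over j ≠ D.over i := fun h => hij (D.over_injective h).symm
  have huu : D.under j ≠ D.under i := fun h => hij (D.under_injective h).symm
  simp only [Interlinks, mirror_over, mirror_under, ne_eq, hij, not_false_eq_true, true_and,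
    D.mirror_strictlyBetween_iff hoo (D.over_ne_under j i),
    D.mirror_strictlyBetween_iff (D.over_ne_under i j).symm huu]
  exact xor_not_not.trans (Iff.of_eq (xor_comm _ _))

lemma mirror_interlinkCount (D : ChordDiagram n) (i : Fin n) :
    D.mirror.interlinkCount i = D.interlinkCount i := by
  simp only [interlinkCount, mirror_interlinks_iff]

/-- Mirroring complements the set of chords counted by an arc label and negates their signs,
so every label drops by the total writhe. -/
lemma mirror_arcLabel (D : ChordDiagram n) (a : Fin (2 * n)) :
    D.mirror.arcLabel a = D.arcLabel a - ∑ j, D.sign j := by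
  have hcompl (j : Fin n) : relpos a (D.mirror.over j) < relpos a (D.mirror.under j) ↔
      ¬ relpos a (D.over j) < relpos a (D.under j) := by
    have : relpos a (D.over j) ≠ relpos a (D.under j) :=
      fun h => D.over_ne_under j j (relpos_injective a h)
    simp only [mirror_over, mirror_under]
    omega
  rw [arcLabel, arcLabel, filter_congr fun j _ => hcompl j,
    ← sum_filter_add_sum_filter_not univ (fun j => relpos a (D.over j) < relpos a (D.under j))]
  simp only [mirror_sign, sum_neg_distrib]
  ring

/-- The shifts of the arc labels cancel; the `2` comes from the `± sign` corrections, which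
`chordVal` applies to exactly one of a chord and its mirror image. -/
lemma mirror_chordVal (D : ChordDiagram n) (i : Fin n) :
    D.mirror.chordVal i = 2 - D.chordVal i := by
  rcases D.sign_unit i with h | h <;>
    simp [chordVal, mirror_arcLabel, h] <;> ring

end ChordDiagram

open ChordDiagram

/-- taking the mirror image transforms the odd writhe polynomial by
`f_{K̄}(t) = -t² · f_K(t⁻¹)`. -/
theorem stmt_10 {n : ℕ} (D : ChordDiagram n) :
    D.mirror.owp = -(T 2 * LaurentPolynomial.invert D.owp) := by
  have hodd (i : Fin n) : D.mirror.OddChord i ↔ D.OddChord i := by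
    rw [OddChord, OddChord, mirror_interlinkCount]
  have hterm (i : Fin n) : C (D.mirror.sign i) * T (D.mirror.chordVal i) =
      -(T 2 * invert (C (D.sign i) * T (D.chordVal i))) := by
    rw [mirror_sign, mirror_chordVal, sub_eq_add_neg, T_add, map_mul, invert_C, invert_T, map_neg]
    ring
  simp only [owp, hodd, hterm, map_sum, mul_sum, sum_neg_distrib]
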